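/- Let $u, v, w \in \mathbb{R}^7$ be orthonormal with $\varphi_0(u,v,w) = 0$ (a $G_2$-frame), and set $R = \chi(u,v,w)$. Then $R$ is a unit vector and $R$ is orthogonal to each of $u$, $v$, $w$. -/

import Mathlib

noncomputable section
open scoped RealInnerProductSpace

abbrev R7 : Type := EuclideanSpace ℝ (Fin 7)

/-- standard basis vector -/
def e (k : Fin 7) : R7 := EuclideanSpace.single k 1

/-- `e^{ijk}(u,v,w)` -/
def tri (i j k : Fin 7) (u v w : R7) : ℝ :=
  Matrix.det !![u i, u j, u k; v i, v j, v k; w i, w j, w k]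

/-- the standard `G₂` 3-form `φ₀` (indices shifted to 0-based) -/
def phi0 (u v w : R7) : ℝ :=
  tri 0 1 2 u v w + tri 0 3 4 u v w + tri 0 5 6 u v w + tri 1 3 5 u v w
    - tri 1 4 6 u v w - tri 2 3 6 u v w - tri 2 4 5 u v w

/-- `e^{ijkl}(u,v,w,z)` -/
def quad (i j k l : Fin 7) (u v w z : R7) : ℝ :=
  Matrix.det !![u i, u j, u k, u l; v i, v j, v k, v l;
    w i, w j, w k, w l; z i, z j, z k, z l]

/-- the 4-form `⋆φ₀` -/
def starphi0 (u v w z : R7) : ℝ :=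
  quad 3 4 5 6 u v w z + quad 1 2 5 6 u v w z + quad 1 2 3 4 u v w z
    + quad 0 2 4 6 u v w z - quad 0 2 3 5 u v w z - quad 0 1 4 5 u v w z
    - quad 0 1 3 6 u v w z

/-- the cross product: `⟪u × v, w⟫ = φ₀(u,v,w)` -/
def cross (u v : R7) : R7 :=
  (WithLp.equiv 2 (Fin 7 → ℝ)).symm fun k => phi0 u v (e k)

/-- the associator `χ`: `⟪χ(u,v,w), z⟫ = ⋆φ₀(u,v,w,z)` -/
def chi (u v w : R7) : R7 :=
  (WithLp.equiv 2 (Fin 7 → ℝ)).symm fun k => starphi0 u v w (e k)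

/-- the coassociator `σ` -/
def sigma (a b c d : R7) : R7 :=
  ⟪b, cross c d⟫ • a + ⟪c, cross a d⟫ • b + ⟪a, cross b d⟫ • c + ⟪b, cross a c⟫ • d

/-- Gram determinant `|u ∧ v ∧ w|²` -/
def gram3 (u v w : R7) : ℝ :=
  Matrix.det !![⟪u,u⟫, ⟪u,v⟫, ⟪u,w⟫; ⟪v,u⟫, ⟪v,v⟫, ⟪v,w⟫; ⟪w,u⟫, ⟪w,v⟫, ⟪w,w⟫]

/-- Gram determinant `|u ∧ v ∧ w ∧ z|²` -/
def gram4 (u v w z : R7) : ℝ :=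
  Matrix.det !![⟪u,u⟫, ⟪u,v⟫, ⟪u,w⟫, ⟪u,z⟫;
    ⟪v,u⟫, ⟪v,v⟫, ⟪v,w⟫, ⟪v,z⟫;
    ⟪w,u⟫, ⟪w,v⟫, ⟪w,w⟫, ⟪w,z⟫;
    ⟪z,u⟫, ⟪z,v⟫, ⟪z,w⟫, ⟪z,z⟫]

/-!
Writing `χ` and `×` in coordinates one checks the identity
`χ(u,v,w) = (u × v) × w + ⟪v,w⟫ u - ⟪u,w⟫ v` and the Lagrange identity
`‖a × b‖² = ‖a‖²‖b‖² - ⟪a,b⟫²`. Orthogonality of `χ(u,v,w)` to `u, v, w` is the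
alternation of `⋆φ₀`. For a `G₂`-frame the identity reduces to `χ(u,v,w) = (u × v) × w`,
and since `u × v` is a unit vector orthogonal to the unit vector `w` (this is `φ₀(u,v,w) = 0`),
Lagrange's identity applied twice gives `‖χ(u,v,w)‖ = 1`.
-/

namespace Matrix

variable {R : Type*} [CommRing R]

theorem det_fin_three_of (a b c d e f g h i : R) :
    !![a, b, c; d, e, f; g, h, i].det =
      a * (e * i - f * h) - b * (d * i - f * g) + c * (d * h - e * g) := by
  simp only [det_fin_three, Fin.isValue, of_apply, cons_val', cons_val_zero, cons_val_fin_one,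
    cons_val_one, cons_val]
  ring

theorem det_fin_four_of (a b c d e f g h i j k l m n o p : R) :
    !![a, b, c, d; e, f, g, h; i, j, k, l; m, n, o, p].det =
      a * (f * (k * p - l * o) - g * (j * p - l * n) + h * (j * o - k * n))
      - b * (e * (k * p - l * o) - g * (i * p - l * m) + h * (i * o - k * m))
      + c * (e * (j * p - l * n) - f * (i * p - l * m) + h * (i * n - j * m))
      - d * (e * (j * o - k * n) - f * (i * o - k * m) + g * (i * n - j * m)) := by
  rw [det_succ_row_zero, Fin.sum_univ_four]
  simp only [Nat.succ_eq_add_one, Nat.reduceAdd, Fin.isValue, Fin.coe_ofNat_eq_mod, Nat.zero_mod,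
    pow_zero, of_apply, cons_val', cons_val_zero, cons_val_fin_one, one_mul, Fin.succAbove_zero,
    det_fin_three, submatrix_apply, Fin.succ_zero_eq_one, cons_val_one, Fin.succ_one_eq_two,
    cons_val, Fin.reduceSucc, Nat.one_mod, pow_one, neg_mul, Fin.succAbove, Fin.castSucc_zero,
    zero_lt_one, ↓reduceIte, Fin.castSucc_one, lt_self_iff_false, Fin.reduceCastSucc,
    Fin.lt_one_iff, Fin.reduceEq, Nat.reduceMod, even_two, Even.neg_pow, one_pow, Fin.reduceLT,
    Nat.mod_succ]
  ring

end Matrix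

theorem inner_cross (a b z : R7) : ⟪cross a b, z⟫ = phi0 a b z := by
  simp only [cross, PiLp.inner_apply, RCLike.inner_apply, conj_trivial,
    WithLp.equiv_symm_apply, phi0, tri, Matrix.det_fin_three_of, e,
    Fin.sum_univ_seven, PiLp.single_apply, Fin.reduceEq, reduceIte]
  ring

theorem norm_cross_sq (a b : R7) : ‖cross a b‖ ^ 2 = ‖a‖ ^ 2 * ‖b‖ ^ 2 - ⟪a, b⟫ ^ 2 := by
  simp only [← real_inner_self_eq_norm_sq, cross, PiLp.inner_apply, RCLike.inner_apply,
    conj_trivial, WithLp.equiv_symm_apply, phi0, tri, Matrix.det_fin_three_of,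
    e, Fin.sum_univ_seven, PiLp.single_apply, Fin.reduceEq, reduceIte]
  ring

theorem norm_cross_of_orthonormal {a b : R7} (ha : ‖a‖ = 1) (hb : ‖b‖ = 1) (hab : ⟪a, b⟫ = 0) :
    ‖cross a b‖ = 1 := by
  have h : ‖cross a b‖ ^ 2 = 1 := by rw [norm_cross_sq, ha, hb, hab]; norm_num
  exact (pow_eq_one_iff_of_nonneg (norm_nonneg _) two_ne_zero).mp h

theorem inner_chi (u v w z : R7) : ⟪chi u v w, z⟫ = starphi0 u v w z := by
  simp only [chi, PiLp.inner_apply, RCLike.inner_apply, conj_trivial,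
    WithLp.equiv_symm_apply, starphi0, quad, Matrix.det_fin_four_of, e,
    Fin.sum_univ_seven, PiLp.single_apply, Fin.reduceEq, reduceIte]
  ring

theorem inner_chi_left (u v w : R7) : ⟪chi u v w, u⟫ = 0 := by
  rw [inner_chi]; simp only [starphi0, quad, Matrix.det_fin_four_of]; ring

theorem inner_chi_middle (u v w : R7) : ⟪chi u v w, v⟫ = 0 := by
  rw [inner_chi]; simp only [starphi0, quad, Matrix.det_fin_four_of]; ring

theorem inner_chi_right (u v w : R7) : ⟪chi u v w, w⟫ = 0 := by
  rw [inner_chi]; simp only [starphi0, quad, Matrix.det_fin_four_of]; ring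

theorem chi_eq_cross_cross_add (u v w : R7) :
    chi u v w = cross (cross u v) w + ⟪v, w⟫ • u - ⟪u, w⟫ • v := by
  refine ext_inner_right ℝ fun z => ?_
  rw [inner_sub_left, inner_add_left, real_inner_smul_left, real_inner_smul_left]
  simp only [chi, cross, PiLp.inner_apply, RCLike.inner_apply, conj_trivial,
    WithLp.equiv_symm_apply, starphi0, quad, Matrix.det_fin_four_of, phi0, tri,
    Matrix.det_fin_three_of, e, Fin.sum_univ_seven, PiLp.single_apply, Fin.reduceEq, reduceIte]
  ring

theorem stmt6 (u v w : R7) (hu : ‖u‖ = 1) (hv : ‖v‖ = 1) (hw : ‖w‖ = 1)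
    (huv : ⟪u, v⟫ = 0) (hvw : ⟪v, w⟫ = 0) (huw : ⟪u, w⟫ = 0)
    (hphi : phi0 u v w = 0) :
    ‖chi u v w‖ = 1 ∧ ⟪chi u v w, u⟫ = 0 ∧ ⟪chi u v w, v⟫ = 0 ∧
      ⟪chi u v w, w⟫ = 0 := by
  refine ⟨?_, inner_chi_left u v w, inner_chi_middle u v w, inner_chi_right u v w⟩
  have hχ : chi u v w = cross (cross u v) w := by
    rw [chi_eq_cross_cross_add, hvw, huw, zero_smul, zero_smul, add_zero, sub_zero]
  have hcross : ‖cross u v‖ = 1 := norm_cross_of_orthonormal hu hv huv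
  rw [hχ]
  exact norm_cross_of_orthonormal hcross hw (by rw [inner_cross]; exact hphi)
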